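/- arXiv:2404.08552 — 5 statements merged into one kernel-verified Lean document; each statement's English description precedes it below -/
import Mathlib

section
/- The family (g, γ) ↦ X_g ∘ Z_γ, indexed by pairs consisting of an element g ∈ G and an additive character γ of G, is linearly independent over ℂ and spans the space of all ℂ-linear endomorphisms of ℂ^G; that is, it forms a ℂ-basis of End_ℂ(ℂ^G). -/
/-- Translation operator `X_g` on `ℂ^G`: `(X_g f)(x) = f (x - g)`. -/
noncomputable def Xop {G : Type*} [AddCommGroup G] (g : G) :
    EuclideanSpace ℂ G →ₗ[ℂ] EuclideanSpace ℂ G where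
  toFun f := WithLp.toLp 2 (fun x => f (x - g))
  map_add' := by intros; rfl
  map_smul' := by intros; rfl

/-- Multiplication operator `Z_γ` on `ℂ^G`: `(Z_γ f)(x) = γ x * f x`. -/
noncomputable def Zop {G : Type*} [AddCommGroup G] (γ : AddChar G ℂ) :
    EuclideanSpace ℂ G →ₗ[ℂ] EuclideanSpace ℂ G where
  toFun f := WithLp.toLp 2 (fun x => γ x * f x)
  map_add' := by
    intro f₁ f₂
    ext x
    show γ x * (f₁ x + f₂ x) = γ x * f₁ x + γ x * f₂ x
    ring
  map_smul' := by
    intro c f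
    ext x
    show γ x * (c * f x) = c * (γ x * f x)
    ring

/-!
Applying `∑ c (g, γ) • X_g Z_γ` to the point mass at `y` and evaluating at `y + h` leaves
`∑ γ, c (h, γ) * γ y`, so a vanishing combination of the operators gives, for each `h`, a vanishing
combination of characters; hence linear independence follows from that of the characters.
As `G` has `|G|` characters, the family has `|G|² = dim End(ℂ^G)` members, so it also spans.
-/

section

variable {G : Type*} [AddCommGroup G]

lemma Xop_comp_Zop_apply (g : G) (γ : AddChar G ℂ) (f : EuclideanSpace ℂ G) (x : G) :
    (Xop g ∘ₗ Zop γ) f x = γ (x - g) * f (x - g) :=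
  rfl

lemma Xop_comp_Zop_single_apply [DecidableEq G] (g h y : G) (γ : AddChar G ℂ) :
    (Xop g ∘ₗ Zop γ) (PiLp.single 2 y 1) (y + h) = if g = h then γ y else 0 := by
  rw [Xop_comp_Zop_apply, PiLp.single_apply]
  by_cases hgh : g = h
  · simp [hgh]
  · have : y + h - g ≠ y := by rwa [Ne, sub_eq_iff_eq_add, add_right_inj, eq_comm]
    simp [hgh, this]

variable [Fintype G]

lemma sum_smul_Xop_comp_Zop_single_apply [DecidableEq G] (c : G × AddChar G ℂ → ℂ) (h y : G) :
    (∑ p, c p • (Xop p.1 ∘ₗ Zop p.2)) (PiLp.single 2 y 1) (y + h) = ∑ γ, c (h, γ) * γ y := by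
  simp only [LinearMap.sum_apply, LinearMap.smul_apply, WithLp.ofLp_sum, Finset.sum_apply,
    PiLp.smul_apply, smul_eq_mul, Xop_comp_Zop_single_apply, Fintype.sum_prod_type, mul_ite,
    mul_zero, Finset.sum_ite_irrel, Finset.sum_const_zero, Finset.sum_ite_eq', Finset.mem_univ,
    if_true]

theorem linearIndependent_Xop_comp_Zop :
    LinearIndependent ℂ (fun p : G × AddChar G ℂ => Xop p.1 ∘ₗ Zop p.2) := by
  classical
  rw [Fintype.linearIndependent_iff]
  rintro c hc ⟨g, γ⟩
  have hchar : ∑ χ : AddChar G ℂ, c (g, χ) • (χ : G → ℂ) = 0 := by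
    funext y
    simpa [hc] using (sum_smul_Xop_comp_Zop_single_apply c g y).symm
  exact Fintype.linearIndependent_iff.mp (AddChar.linearIndependent G ℂ) _ hchar γ

theorem span_range_Xop_comp_Zop_eq_top :
    Submodule.span ℂ (Set.range (fun p : G × AddChar G ℂ => Xop p.1 ∘ₗ Zop p.2)) = ⊤ := by
  have : Nonempty (G × AddChar G ℂ) := ⟨(0, 1)⟩
  refine linearIndependent_Xop_comp_Zop.span_eq_top_of_card_eq_finrank ?_
  rw [Fintype.card_prod, AddChar.card_eq, Module.finrank_linearMap, finrank_euclideanSpace]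

end

/-- The family `(g, γ) ↦ X_g ∘ Z_γ` is linearly independent over `ℂ` and spans the
space of all `ℂ`-linear endomorphisms of `ℂ^G`; i.e. it is a basis of `End(ℂ^G)`. -/
theorem Xop_Zop_basis {G : Type*} [AddCommGroup G] [Fintype G] :
    LinearIndependent ℂ (fun p : G × AddChar G ℂ => Xop p.1 ∘ₗ Zop p.2) ∧
    Submodule.span ℂ (Set.range (fun p : G × AddChar G ℂ => Xop p.1 ∘ₗ Zop p.2)) = ⊤ :=
  ⟨linearIndependent_Xop_comp_Zop, span_range_Xop_comp_Zop_eq_top⟩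
end

section
/- Let f : V → V → A be antisymmetric with divergence zero at every vertex (∑_{u ∈ V} f u v = 0 for all v ∈ V). Then the support graph H of f has no bridges: for all u, v ∈ V with f u v ≠ 0, the edge {u, v} is not a bridge of H. -/
/-!
Let `S` be the set of vertices reachable from `v` once the edge `s(u, v)` is deleted. Summing
the divergence over `S`, the flow between two vertices of `S` cancels by antisymmetry, so the
net flow into `S` from its complement vanishes. If `s(u, v)` were a bridge, then `u ∉ S` and
`s(u, v)` would be the only edge of the support graph leaving `S`, so that net flow would be
`f u v ≠ 0`.
-/

/-- The support graph of an antisymmetric function `f : V → V → A`: distinct vertices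
`u`, `v` are adjacent iff `f u v ≠ 0`. -/
def supportGraph {V A : Type*} [AddCommGroup A] (f : V → V → A)
    (hanti : ∀ u v, f u v = - f v u) (hdiag : ∀ v, f v v = 0) : SimpleGraph V where
  Adj u v := f u v ≠ 0
  symm := by
    constructor
    intro u v h
    rw [hanti v u]
    simpa using h
  loopless := by
    constructor
    intro v h
    exact h (hdiag v)

open Finset

section Flow

variable {V A : Type*} [AddCommGroup A]

theorem sum_sum_eq_zero_of_antisymm (f : V → V → A) (hanti : ∀ u v, f u v = - f v u)
    (hdiag : ∀ v, f v v = 0) (S : Finset V) : ∑ w ∈ S, ∑ x ∈ S, f x w = 0 := by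
  rw [← sum_product' (f := fun w x => f x w)]
  refine sum_involution (fun p _ => p.swap) (fun p _ => by simp [hanti p.2 p.1])
    (fun p _ hp hswap => hp ?_) (fun p hp => by simpa [and_comm] using hp) (fun _ _ => rfl)
  obtain ⟨a, b⟩ := p
  obtain rfl : b = a := (Prod.ext_iff.mp hswap).1
  exact hdiag b

theorem sum_sum_compl_eq_zero_of_divergence_free [Fintype V] [DecidableEq V] (f : V → V → A)
    (hanti : ∀ u v, f u v = - f v u) (hdiag : ∀ v, f v v = 0)
    (hdiv : ∀ v : V, ∑ u : V, f u v = 0) (S : Finset V) :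
    ∑ w ∈ S, ∑ x ∈ Sᶜ, f x w = 0 := by
  calc ∑ w ∈ S, ∑ x ∈ Sᶜ, f x w
      = ∑ w ∈ S, ∑ x ∈ S, f x w + ∑ w ∈ S, ∑ x ∈ Sᶜ, f x w := by
        rw [sum_sum_eq_zero_of_antisymm f hanti hdiag S, zero_add]
    _ = ∑ w ∈ S, ∑ x : V, f x w := by
        rw [← sum_add_distrib]
        exact sum_congr rfl fun w _ => sum_add_sum_compl S _
    _ = 0 := sum_eq_zero fun w _ => hdiv w

theorem sum_sum_compl_eq_of_ne_zero_imp [Fintype V] [DecidableEq V] (f : V → V → A)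
    {S : Finset V} {u v : V} (hv : v ∈ S) (hu : u ∉ S)
    (h : ∀ w ∈ S, ∀ x ∉ S, f x w ≠ 0 → x = u ∧ w = v) :
    ∑ w ∈ S, ∑ x ∈ Sᶜ, f x w = f u v := by
  rw [← sum_product' (f := fun w x => f x w)]
  refine sum_eq_single_of_mem (v, u) (by simp [hv, hu]) fun ⟨w, x⟩ hwx hne => ?_
  rw [mem_product, mem_compl] at hwx
  by_contra hfxw
  obtain ⟨rfl, rfl⟩ := h w hwx.1 x hwx.2 hfxw
  exact hne rfl

end Flow

namespace SimpleGraph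

variable {V : Type*} {G : SimpleGraph V} {u v x w : V}

theorem IsBridge.eq_of_adj_of_reachable (hb : G.IsBridge s(u, v)) (hadj : G.Adj x w)
    (hw : (G.deleteEdges {s(u, v)}).Reachable v w)
    (hx : ¬ (G.deleteEdges {s(u, v)}).Reachable v x) : x = u ∧ w = v := by
  have hxw : s(x, w) = s(u, v) := by
    by_contra hne
    have hwx : (G.deleteEdges {s(u, v)}).Adj w x :=
      deleteEdges_adj.mpr ⟨hadj.symm, by simpa [Sym2.eq_swap] using hne⟩
    exact hx (hw.trans hwx.reachable)
  rcases Sym2.eq_iff.mp hxw with ⟨rfl, rfl⟩ | ⟨rfl, rfl⟩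
  · exact ⟨rfl, rfl⟩
  · exact absurd hw.symm hb

end SimpleGraph

/-- If `f : V → V → A` is antisymmetric with divergence zero at every vertex, then
the support graph of `f` has no bridges: whenever `f u v ≠ 0`, the edge `s(u, v)`
is not a bridge of the support graph. -/
theorem supportGraph_no_bridge {V A : Type*} [Fintype V] [AddCommGroup A]
    (f : V → V → A) (hanti : ∀ u v, f u v = - f v u) (hdiag : ∀ v, f v v = 0)
    (hdiv : ∀ v : V, ∑ u : V, f u v = 0) (u v : V) (huv : f u v ≠ 0) :
    ¬ (supportGraph f hanti hdiag).IsBridge s(u, v) := by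
  classical
  intro hb
  set S := univ.filter (((supportGraph f hanti hdiag).deleteEdges {s(u, v)}).Reachable v)
  have hu : u ∉ S := by simpa [S] using fun h => hb h.symm
  have hcut := sum_sum_compl_eq_zero_of_divergence_free f hanti hdiag hdiv S
  rw [sum_sum_compl_eq_of_ne_zero_imp f (by simp [S]) hu
    fun w hw x hx hfxw => hb.eq_of_adj_of_reachable hfxw (by simpa [S] using hw)
      (by simpa [S] using hx)] at hcut
  exact huv hcut
end

section
/- Let G be a simple graph on a finite type V, let c be a closed walk of G that is a cycle, and let γ ∈ A. Then the cycle flow f_{c,γ} is antisymmetric and its divergence at every vertex of V is 0. -/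
/-- The cycle flow associated with a closed walk `c` and an element `γ`:
`f_{c,γ}(u, v) = (a - b) • γ`, where `a` is the number of darts of `c` from `u` to `v`
and `b` is the number of darts of `c` from `v` to `u`. -/
def cycleFlow {V : Type*} [DecidableEq V] {G : SimpleGraph V} {x : V}
    (c : G.Walk x x) {A : Type*} [AddCommGroup A] (γ : A) : V → V → A :=
  fun u v =>
    (((c.darts.filter (fun d => d.fst = u ∧ d.snd = v)).length : ℤ) -
      ((c.darts.filter (fun d => d.fst = v ∧ d.snd = u)).length : ℤ)) • γ

private lemma sum_filter_fst {V : Type*} [Fintype V] [DecidableEq V] {G : SimpleGraph V}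
    (l : List G.Dart) (v : V) :
    ∑ u : V, (l.filter (fun d => d.fst = u ∧ d.snd = v)).length
      = (l.filter (fun d => d.snd = v)).length := by
  induction l with
  | nil => simp
  | cons d l ih =>
    have step : ∀ u : V, (List.filter (fun d => decide (d.fst = u ∧ d.snd = v)) (d :: l)).length
        = (if d.fst = u ∧ d.snd = v then 1 else 0)
          + (List.filter (fun d => decide (d.fst = u ∧ d.snd = v)) l).length := by
      intro u
      rw [List.filter_cons]
      split_ifs with h <;> simp_all <;> omega
    rw [Finset.sum_congr rfl (fun u _ => step u), Finset.sum_add_distrib, ih, List.filter_cons]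
    have : (∑ u : V, if d.fst = u ∧ d.snd = v then 1 else 0)
        = (if d.snd = v then 1 else 0) := by
      by_cases h : d.snd = v
      · simp only [h, and_true]
        rw [Finset.sum_ite_eq]
        simp
      · simp [h]
    rw [this]
    split_ifs with h <;> simp_all <;> omega
private lemma sum_filter_snd {V : Type*} [Fintype V] [DecidableEq V] {G : SimpleGraph V}
    (l : List G.Dart) (v : V) :
    ∑ u : V, (l.filter (fun d => d.fst = v ∧ d.snd = u)).length
      = (l.filter (fun d => d.fst = v)).length := by
  induction l with
  | nil => simp
  | cons d l ih =>
    have step : ∀ u : V, (List.filter (fun d => decide (d.fst = v ∧ d.snd = u)) (d :: l)).length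
        = (if d.fst = v ∧ d.snd = u then 1 else 0)
          + (List.filter (fun d => decide (d.fst = v ∧ d.snd = u)) l).length := by
      intro u
      rw [List.filter_cons]
      split_ifs with h <;> simp_all <;> omega
    rw [Finset.sum_congr rfl (fun u _ => step u), Finset.sum_add_distrib, ih, List.filter_cons]
    have : (∑ u : V, if d.fst = v ∧ d.snd = u then 1 else 0)
        = (if d.fst = v then 1 else 0) := by
      by_cases h : d.fst = v
      · simp only [h, true_and]
        rw [Finset.sum_ite_eq]
        simp
      · simp [h]
    rw [this]
    split_ifs with h <;> simp_all <;> omega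

private lemma count_in_out {V : Type*} [DecidableEq V] {G : SimpleGraph V} {x : V}
    (c : G.Walk x x) (v : V) :
    (c.darts.filter (fun d => d.snd = v)).length
      = (c.darts.filter (fun d => d.fst = v)).length := by
  have h1 : (c.darts.filter (fun d => d.snd = v)).length
      = (c.darts.map (·.snd)).count v := by
    rw [List.count_eq_countP, List.countP_map, List.countP_eq_length_filter]
    congr 1
  have h2 : (c.darts.filter (fun d => d.fst = v)).length
      = (c.darts.map (·.fst)).count v := by
    rw [List.count_eq_countP, List.countP_map, List.countP_eq_length_filter]
    congr 1
  rw [h1, h2, c.map_snd_darts, c.map_fst_darts]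
  have hne : c.support ≠ [] := c.support_ne_nil
  have hlast : c.support.getLast hne = x := c.getLast_support
  have hdl : c.support.dropLast ++ [x] = c.support := by
    conv_rhs => rw [← List.dropLast_append_getLast hne, hlast]
  have hcons : x :: c.support.tail = c.support := (c.support_eq_cons).symm
  have key := hdl.trans hcons.symm
  have := congrArg (List.count v) key
  simp only [List.count_append, List.count_cons, List.count_singleton, List.count_nil] at this
  split_ifs at this <;> omega

/-- For a closed walk `c` of a simple graph that is a cycle, the cycle flow `f_{c,γ}`
is antisymmetric and has divergence zero at every vertex. -/
theorem cycleFlow_antisymm_div_zero {V : Type*} [Fintype V] [DecidableEq V]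
    {A : Type*} [AddCommGroup A] (G : SimpleGraph V) {x : V} (c : G.Walk x x)
    (hc : c.IsCycle) (γ : A) :
    (∀ u v, cycleFlow c γ u v = - cycleFlow c γ v u) ∧
    (∀ v, cycleFlow c γ v v = 0) ∧
    (∀ v : V, ∑ u : V, cycleFlow c γ u v = 0) := by
  refine ⟨fun u v => ?_, fun v => ?_, fun v => ?_⟩
  · unfold cycleFlow
    rw [← neg_smul]; ring_nf
  · unfold cycleFlow
    simp
  · unfold cycleFlow
    rw [← Finset.sum_smul]
    have hz : (∑ u : V, (((c.darts.filter (fun d => d.fst = u ∧ d.snd = v)).length : ℤ) -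
        ((c.darts.filter (fun d => d.fst = v ∧ d.snd = u)).length : ℤ))) = 0 := by
      rw [Finset.sum_sub_distrib, ← Nat.cast_sum, ← Nat.cast_sum,
        sum_filter_fst, sum_filter_snd, count_in_out, sub_self]
    rw [hz, zero_smul]
end

section
/- Let f : V → V → A be antisymmetric with divergence zero at every vertex (∑_{u ∈ V} f u v = 0 for all v ∈ V), and let H be the support graph of f. Then there exist a natural number k, closed walks c₁, …, c_k of H each of which is a cycle, and elements γ₁, …, γ_k ∈ A, such that f is the pointwise sum of the cycle flows: f = ∑_{i=1}^{k} f_{c_i, γ_i}. -/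
/-!
Induction on the size of the support of `f`. If `f ≠ 0` is divergence-free, no vertex meets
exactly one edge of its support graph `H`, since the flow through that edge could not be
balanced; so extending a longest path of `H` at its start closes a cycle. Subtracting the
cycle flow of that cycle, weighted by the value of `f` on one of its darts, keeps `f`
divergence-free, creates no new support, and kills that dart's edge.
-/

open SimpleGraph

theorem List.sum_countP_fiberwise_eq_countP {α V : Type*} [Fintype V] [DecidableEq V]
    (l : List α) (g : α → V) (p : α → Prop) [DecidablePred p] :
    ∑ u, l.countP (fun a => g a = u ∧ p a) = l.countP p := by
  induction l with
  | nil => simp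
  | cons a l ih =>
    simp only [List.countP_cons, Finset.sum_add_distrib, ih]
    by_cases ha : p a <;> simp [ha]

namespace SimpleGraph

variable {V : Type*} {G : SimpleGraph V}

theorem exists_isCycle_of_forall_exists_adj_ne [Finite V]
    (hleaf : ∀ u w, G.Adj u w → ∃ x, G.Adj u x ∧ x ≠ w) {a b : V} (hab : G.Adj a b) :
    ∃ (x : V) (c : G.Walk x x), c.IsCycle := by
  classical
  have : Nonempty V := ⟨a⟩
  obtain ⟨u, v, p, hp, hmax⟩ := Walk.exists_isPath_forall_isPath_length_le_length G
  have hnil : ¬ p.Nil := fun h => by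
    simpa [Walk.length_eq_zero_iff.2 h] using hmax a b hab.toWalk hab.isPath_toWalk
  obtain ⟨x, hux, hx⟩ := hleaf u p.snd (p.adj_snd hnil)
  have hxp : x ∈ p.support := by_contra fun hxp => by
    simpa using hmax x v (.cons hux.symm p) (hp.cons hxp)
  refine ⟨x, .cons hux.symm (p.takeUntil x hxp),
    (Walk.cons_isCycle_iff _ _).2 ⟨hp.takeUntil hxp, fun he => hx ?_⟩⟩
  exact hp.eq_snd_of_mem_edges (Sym2.eq_swap ▸ p.edges_takeUntil_subset_edges hxp he)

theorem Walk.IsTrail.symm_notMem_darts {u v : V} {p : G.Walk u v} (hp : p.IsTrail)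
    {d : G.Dart} (hd : d ∈ p.darts) : d.symm ∉ p.darts := fun hd' =>
  d.symm_ne (List.inj_on_of_nodup_map hp.edges_nodup hd' hd d.edge_symm)

theorem Walk.map_fst_darts_perm_map_snd_darts {x : V} (c : G.Walk x x) :
    (c.darts.map (·.fst)).Perm (c.darts.map (·.snd)) := by
  refine (List.perm_append_singleton x _).symm.trans ?_ |>.cons_inv
  rw [c.map_fst_darts_append, c.cons_map_snd_darts]

theorem length_filter_dart_eq_count [DecidableEq V] (l : List G.Dart) (d : G.Dart) :
    (l.filter fun d' => d'.fst = d.fst ∧ d'.snd = d.snd).length = l.count d := by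
  rw [List.count_eq_length_filter]
  congr 1
  refine List.filter_congr fun d' _ => ?_
  rw [Bool.eq_iff_iff]
  simp [Dart.ext_iff, Prod.ext_iff]

end SimpleGraph

section CycleFlow

variable {V A : Type*} [DecidableEq V] [AddCommGroup A] {G : SimpleGraph V} {x : V}

theorem cycleFlow_dart (c : G.Walk x x) (γ : A) (d : G.Dart) :
    cycleFlow c γ d.fst d.snd = ((c.darts.count d : ℤ) - c.darts.count d.symm) • γ := by
  rw [cycleFlow, length_filter_dart_eq_count, ← length_filter_dart_eq_count c.darts d.symm]
  rfl

theorem cycleFlow_dart_of_isTrail {c : G.Walk x x} (hc : c.IsTrail) (γ : A) {d : G.Dart}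
    (hd : d ∈ c.darts) : cycleFlow c γ d.fst d.snd = γ := by
  rw [cycleFlow_dart, List.count_eq_one_of_mem hc.edges_nodup.of_map hd,
    List.count_eq_zero_of_not_mem (hc.symm_notMem_darts hd)]
  simp

theorem cycleFlow_eq_zero_of_not_adj (c : G.Walk x x) (γ : A) {u v : V} (h : ¬ G.Adj u v) :
    cycleFlow c γ u v = 0 := by
  have hnil : ∀ a b, ¬ G.Adj a b → c.darts.filter (fun d => d.fst = a ∧ d.snd = b) = [] :=
    fun a b hab => List.filter_eq_nil_iff.2 fun d _ hd => hab (by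
      obtain ⟨rfl, rfl⟩ := of_decide_eq_true hd
      exact d.adj)
  rw [cycleFlow, hnil u v h, hnil v u (fun h' => h h'.symm)]
  simp

theorem cycleFlow_mapLe {G' : SimpleGraph V} (hle : G ≤ G') (c : G.Walk x x) (γ : A) :
    cycleFlow (c.mapLe hle) γ = cycleFlow c γ := by
  ext u v
  simp only [cycleFlow, Walk.mapLe, Walk.darts_map, List.filter_map, List.length_map]
  rfl

end CycleFlow

structure IsCirculation {V A : Type*} [Fintype V] [AddCommGroup A] (f : V → V → A) : Prop where
  anti : ∀ u v, f u v = -f v u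
  diag : ∀ v, f v v = 0
  div : ∀ v, ∑ u, f u v = 0

theorem IsCirculation.sub {V A : Type*} [Fintype V] [AddCommGroup A] {f g : V → V → A}
    (hf : IsCirculation f) (hg : IsCirculation g) : IsCirculation (f - g) where
  anti u v := by simp only [Pi.sub_apply, hf.anti u v, hg.anti u v]; abel
  diag v := by simp [hf.diag v, hg.diag v]
  div v := by simp [Finset.sum_sub_distrib, hf.div v, hg.div v]

theorem isCirculation_cycleFlow {V A : Type*} [Fintype V] [DecidableEq V] [AddCommGroup A]
    {G : SimpleGraph V} {x : V} (c : G.Walk x x) (γ : A) : IsCirculation (cycleFlow c γ) where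
  anti u v := by rw [cycleFlow, cycleFlow, ← neg_smul, neg_sub]
  diag v := by rw [cycleFlow, sub_self, zero_smul]
  div v := by
    simp only [cycleFlow, ← Finset.sum_smul, Finset.sum_sub_distrib,
      ← List.countP_eq_length_filter, ← Nat.cast_sum, List.sum_countP_fiberwise_eq_countP]
    have hout : ∑ u, c.darts.countP (fun d => d.fst = v ∧ d.snd = u) =
        c.darts.countP (·.fst = v) := by
      simpa only [and_comm] using List.sum_countP_fiberwise_eq_countP c.darts (·.snd) (·.fst = v)
    have hbalance : c.darts.countP (·.snd = v) = c.darts.countP (·.fst = v) := by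
      simpa [List.countP_map, Function.comp_def] using
        (c.map_fst_darts_perm_map_snd_darts.countP_eq (· = v)).symm
    rw [hout, hbalance, sub_self, zero_smul]

section SupportGraph

variable {V A : Type*} [AddCommGroup A]

theorem support_uncurry_sub_cycleFlow_ssubset [DecidableEq V] {f : V → V → A}
    {hanti : ∀ u v, f u v = -f v u} {hdiag : ∀ v, f v v = 0} {x : V}
    {c : (supportGraph f hanti hdiag).Walk x x} (hc : c.IsTrail)
    {d : (supportGraph f hanti hdiag).Dart} (hd : d ∈ c.darts) :
    (Function.uncurry (f - cycleFlow c (f d.fst d.snd))).support ⊂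
      (Function.uncurry f).support := by
  have hsub : (Function.uncurry (f - cycleFlow c (f d.fst d.snd))).support ⊆
      (Function.uncurry f).support := fun ⟨u, v⟩ huv hnotMem => huv <| by
    have hfuv : f u v = 0 := by simpa using hnotMem
    simp [hfuv, cycleFlow_eq_zero_of_not_adj c _ (u := u) (v := v) (not_not.2 hfuv)]
  refine (Set.ssubset_iff_of_subset hsub).2 ⟨d.toProd, d.adj, fun hne => hne ?_⟩
  change f d.fst d.snd - cycleFlow c _ d.fst d.snd = 0
  rw [cycleFlow_dart_of_isTrail hc _ hd, sub_self]

variable [Fintype V] {f : V → V → A}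

theorem IsCirculation.exists_isCycle_supportGraph (hf : IsCirculation f) (hf0 : f ≠ 0) :
    ∃ (x : V) (c : (supportGraph f hf.anti hf.diag).Walk x x), c.IsCycle := by
  obtain ⟨a, b, hab⟩ : ∃ a b, f a b ≠ 0 := by simpa [funext_iff] using hf0
  refine exists_isCycle_of_forall_exists_adj_ne (fun u w huw => ?_) hab
  have hout : ∑ x, f u x = 0 := by
    rw [Finset.sum_congr rfl fun x _ => hf.anti u x, Finset.sum_neg_distrib, hf.div, neg_zero]
  by_contra! hx
  have hsum : ∑ x, f u x = f u w :=
    Finset.sum_eq_single w (fun x _ hxw => not_not.1 (mt (hx x) hxw)) (by simp)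
  exact huw (hsum.symm.trans hout)

theorem IsCirculation.exists_eq_sum_cycleFlow [DecidableEq V] {G : SimpleGraph V}
    (hf : IsCirculation f) (hG : supportGraph f hf.anti hf.diag ≤ G) :
    ∃ (k : ℕ) (c : Fin k → Σ x, G.Walk x x) (γ : Fin k → A),
      (∀ i, (c i).2.IsCycle) ∧ f = ∑ i, cycleFlow (c i).2 (γ i) := by
  induction hn : (Function.uncurry f).support.ncard using Nat.strong_induction_on
    generalizing f with
  | _ n ih =>
  obtain rfl | hf0 := eq_or_ne f 0
  · exact ⟨0, finZeroElim, finZeroElim, finZeroElim, by simp⟩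
  obtain ⟨x, c, hc⟩ := hf.exists_isCycle_supportGraph hf0
  have hss :=
    support_uncurry_sub_cycleFlow_ssubset hc.isTrail (c.firstDart_mem_darts hc.not_nil)
  set γ := f (c.firstDart hc.not_nil).fst (c.firstDart hc.not_nil).snd
  obtain ⟨k, c', γ', hc', hsum⟩ := ih _ (hn ▸ Set.ncard_lt_ncard hss)
    (hf.sub (isCirculation_cycleFlow c γ))
    (le_trans (fun u v huv => hss.subset (show (u, v) ∈ _ from huv)) hG) rfl
  refine ⟨k + 1, Fin.cons (α := fun _ => Σ x, G.Walk x x) ⟨x, c.mapLe hG⟩ c',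
    Fin.cons γ γ', Fin.cases (hc.mapLe hG) hc', ?_⟩
  rw [Fin.sum_univ_succ]
  -- `simp` cannot rewrite `Fin.cons` inside the dependent type of the walks
  change f = cycleFlow (c.mapLe hG) γ + ∑ i, cycleFlow (c' i).2 (γ' i)
  rw [cycleFlow_mapLe, ← hsum, add_sub_cancel]

end SupportGraph

/-- An antisymmetric function with divergence zero at every vertex is a finite sum of
cycle flows along cycles of its support graph. -/
theorem eq_sum_cycleFlows {V A : Type*} [Fintype V] [DecidableEq V] [AddCommGroup A]
    (f : V → V → A) (hanti : ∀ u v, f u v = - f v u) (hdiag : ∀ v, f v v = 0)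
    (hdiv : ∀ v : V, ∑ u : V, f u v = 0) :
    ∃ (k : ℕ) (x : Fin k → V)
      (c : ∀ i : Fin k, (supportGraph f hanti hdiag).Walk (x i) (x i))
      (γ : Fin k → A),
      (∀ i, (c i).IsCycle) ∧
      ∀ u v, f u v = ∑ i : Fin k, cycleFlow (c i) (γ i) u v := by
  obtain ⟨k, c, γ, hc, hsum⟩ :=
    IsCirculation.exists_eq_sum_cycleFlow ⟨hanti, hdiag, hdiv⟩ le_rfl
  exact ⟨k, fun i => (c i).1, fun i => (c i).2, γ, hc,
    fun u v => by simp [hsum, Finset.sum_apply]⟩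
end

section
/- Let G be a connected simple graph on a finite nonempty type V, let A be an additive commutative group, and let x : V → A satisfy ∑_{v ∈ V} x(v) = 0. Then there exists an antisymmetric function f : V → V → A with f u v = 0 whenever u and v are not adjacent in G, such that the divergence of f at every vertex v equals x(v): ∑_{u ∈ V} f u v = x(v) for all v ∈ V. -/
open Finset

private lemma walk_flow {V A : Type*} [Fintype V] [DecidableEq V] [AddCommGroup A]
    (G : SimpleGraph V) {a b : V} (p : G.Walk a b) (c : A) :
    ∃ f : V → V → A, (∀ u v, f u v = - f v u) ∧ (∀ v, f v v = 0) ∧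
      (∀ u v, ¬ G.Adj u v → f u v = 0) ∧
      (∀ v : V, ∑ u : V, f u v =
        (if v = b then c else 0) - (if v = a then c else 0)) := by
  induction p with
  | nil =>
    exact ⟨0, by simp, by simp, by simp, by simp⟩
  | @cons a b w h p ih =>
    obtain ⟨f, hanti, hdiag, hsupp, hdiv⟩ := ih
    have hab : a ≠ b := G.ne_of_adj h
    refine ⟨fun u v => ((if u = a ∧ v = b then c else 0)
        - (if u = b ∧ v = a then c else 0)) + f u v, ?_, ?_, ?_, ?_⟩
    · intro u v
      dsimp only
      rw [hanti u v]
      simp only [and_comm]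
      abel
    · intro v
      have h1 : ¬ (v = a ∧ v = b) := by rintro ⟨rfl, rfl⟩; exact hab rfl
      have h2 : ¬ (v = b ∧ v = a) := by rintro ⟨rfl, rfl⟩; exact hab rfl
      simp [hdiag, h1, h2]
    · intro u v hadj
      have h1 : ¬ (u = a ∧ v = b) := fun ⟨h1, h2⟩ => hadj (h1 ▸ h2 ▸ h)
      have h2 : ¬ (u = b ∧ v = a) := fun ⟨h1, h2⟩ => hadj (h1 ▸ h2 ▸ h.symm)
      simp [h1, h2, hsupp u v hadj]
    · intro v
      rw [Finset.sum_add_distrib, hdiv v, Finset.sum_sub_distrib]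
      have e1 : ∑ u : V, (if u = a ∧ v = b then c else 0)
          = (if v = b then c else 0) := by
        by_cases hv : v = b
        · simp [hv]
        · simp [hv]
      have e2 : ∑ u : V, (if u = b ∧ v = a then c else 0)
          = (if v = a then c else 0) := by
        by_cases hv : v = a
        · simp [hv]
        · simp [hv]
      rw [e1, e2]
      abel

/-- Let `G` be a connected simple graph on a finite nonempty type `V`, and let
`x : V → A` have total sum zero. Then there is an antisymmetric function
`f : V → V → A`, supported on adjacent pairs, whose divergence at every vertex `v`
equals `x v`. -/
theorem exists_flow_with_divergence {V A : Type*} [Fintype V] [Nonempty V]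
    [AddCommGroup A] (G : SimpleGraph V) (hG : G.Connected) (x : V → A)
    (hx : ∑ v : V, x v = 0) :
    ∃ f : V → V → A, (∀ u v, f u v = - f v u) ∧ (∀ v, f v v = 0) ∧
      (∀ u v, ¬ G.Adj u v → f u v = 0) ∧
      (∀ v : V, ∑ u : V, f u v = x v) := by
  classical
  obtain ⟨r⟩ := ‹Nonempty V›
  have key : ∀ w : V, ∃ f : V → V → A, (∀ u v, f u v = - f v u) ∧
      (∀ v, f v v = 0) ∧ (∀ u v, ¬ G.Adj u v → f u v = 0) ∧
      (∀ v : V, ∑ u : V, f u v =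
        (if v = w then x w else 0) - (if v = r then x w else 0)) := by
    intro w
    obtain ⟨p⟩ := hG.preconnected r w
    exact walk_flow G p (x w)
  choose f hanti hdiag hsupp hdiv using key
  refine ⟨fun u v => ∑ w : V, f w u v, ?_, ?_, ?_, ?_⟩
  · intro u v
    rw [← Finset.sum_neg_distrib]
    exact Finset.sum_congr rfl fun w _ => hanti w u v
  · intro v
    simp [hdiag]
  · intro u v h
    exact Finset.sum_eq_zero fun w _ => hsupp w u v h
  · intro v
    rw [Finset.sum_comm]
    have : ∑ w : V, ∑ u : V, f w u v
        = ∑ w : V, ((if v = w then x w else 0) - (if v = r then x w else 0)) := by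
      exact Finset.sum_congr rfl fun w _ => hdiv w v
    rw [this, Finset.sum_sub_distrib]
    have e1 : ∑ w : V, (if v = w then x w else 0) = x v := by simp
    have e2 : ∑ w : V, (if v = r then x w else 0) = 0 := by
      by_cases hv : v = r <;> simp [hv, hx]
    rw [e1, e2, sub_zero]
end
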